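/- Let $\mathfrak{p}$ be a partition of an even number $N$. Form the sequence of all odd parts of $\mathfrak{p}$ (there is an even number of them since $N$ is even), arranged decreasingly as $(p_1^*, \ldots, p_{2m}^*)$, apply operation $(\star)$ (replace each pair with $p_{2j-1}^* > p_{2j}^*$ by $(p_{2j-1}^*-1, p_{2j}^*+1)$), and recombine the results with the even parts of $\mathfrak{p}$, discarding zeros. Then the result is a partition of $N$ in which every odd part occurs with even multiplicity (i.e., the result is the Jordan type of a nilpotent orbit of type $C$). -/

import Mathlib

/-- The operation `(⋆)`: in a sequence read as consecutive pairs, every strictly decreasing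
pair `(a, b)` with `a > b` is replaced by `(a - 1, b + 1)`; all other entries are unchanged. -/
def starOp : List ℕ → List ℕ
  | a :: b :: rest => if b < a then (a - 1) :: (b + 1) :: starOp rest
                      else a :: b :: starOp rest
  | l => l

/-- The parts of a multiset listed in non-increasing order. -/
def descSort (s : Multiset ℕ) : List ℕ :=
  (Multiset.sort s (· ≤ ·)).reverse

/-- The `C`-collapse algorithm: apply `(⋆)` to the decreasing sequence of odd parts of `𝔭`,
recombine with the even parts, and discard zeros. -/
def cCollapse (p : Multiset ℕ) : Multiset ℕ :=
  ((starOp (descSort (p.filter (fun x => x % 2 = 1))) : List ℕ) : Multiset ℕ).filter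
      (fun x => 0 < x)
    + p.filter (fun x => x % 2 = 0)

/-!
Sorted decreasingly and read in consecutive pairs, the odd parts form pairs `(a, b)` with
`a ≥ b`. If `a > b`, the operation `(⋆)` turns the pair into the two even parts
`(a - 1, b + 1)`; if `a = b`, it leaves two equal odd parts. So every odd part of the result
comes with a partner equal to it, provided there is an even number of odd parts, which holds
because `N` is even. The operation moves one unit inside each pair, so the sum is unchanged.
-/

lemma starOp_sum (l : List ℕ) : (starOp l).sum = l.sum := by
  induction l using starOp.induct with
  | case1 a b rest hba ih => simp only [starOp, if_pos hba, List.sum_cons, ih]; omega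
  | case2 a b rest hba ih => simp only [starOp, if_neg hba, List.sum_cons, ih]
  | case3 l h =>
    match l, h with
    | [], _ | [_], _ => rfl
    | a :: b :: r, h => exact absurd rfl (h a b r)

lemma even_count_starOp {l : List ℕ} (hodd : ∀ x ∈ l, Odd x) (hanti : l.Pairwise (· ≥ ·))
    (hlen : Even l.length) {v : ℕ} (hv : Odd v) : Even ((starOp l).count v) := by
  induction l using starOp.induct with
  | case1 a b rest hba ih =>
    have hrest := ih (fun x hx => hodd x (by simp [hx])) hanti.of_cons.of_cons
      (by simpa [Nat.even_add_one] using hlen)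
    have ha := Nat.odd_iff.mp (hodd a (by simp))
    have hb := Nat.odd_iff.mp (hodd b (by simp))
    have hv' := Nat.odd_iff.mp hv
    have hav : a - 1 ≠ v := by omega
    have hbv : b + 1 ≠ v := by omega
    simpa [starOp, if_pos hba, List.count_cons, hav, hbv] using hrest
  | case2 a b rest hba ih =>
    have hrest := ih (fun x hx => hodd x (by simp [hx])) hanti.of_cons.of_cons
      (by simpa [Nat.even_add_one] using hlen)
    obtain rfl : a = b :=
      le_antisymm (not_lt.mp hba) ((List.pairwise_cons.mp hanti).1 b (by simp))
    simp only [starOp, if_neg hba, List.count_cons]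
    by_cases hav : a = v <;> simp [hav, parity_simps, hrest]
  | case3 l h =>
    match l, hlen, h with
    | [], _, _ => simp [starOp]
    | [_], hlen, _ => simp at hlen
    | a :: b :: r, _, h => exact absurd rfl (h a b r)

lemma coe_descSort (s : Multiset ℕ) : (descSort s : Multiset ℕ) = s := by
  rw [descSort, Multiset.coe_reverse, Multiset.sort_eq]

lemma pairwise_descSort (s : Multiset ℕ) : (descSort s).Pairwise (· ≥ ·) := by
  rw [descSort, List.pairwise_reverse]
  exact Multiset.pairwise_sort s (· ≤ ·)

lemma Multiset.even_sum_iff_even_card_filter_odd (s : Multiset ℕ) :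
    Even s.sum ↔ Even (card (s.filter (fun x => x % 2 = 1))) := by
  induction s using Multiset.induction_on with
  | empty => simp
  | cons a t ih =>
    rw [Multiset.sum_cons, Nat.even_add, ih, Multiset.filter_cons]
    rcases Nat.mod_two_eq_zero_or_one a with ha | ha
    · simp [ha, Nat.even_iff]
    · simp [ha, Nat.even_add_one, Nat.even_iff]

lemma sum_cCollapse (p : Multiset ℕ) : (cCollapse p).sum = p.sum := by
  have hfilter_pos : ∀ L : Multiset ℕ, (L.filter (fun x => 0 < x)).sum = L.sum := fun L => by
    conv_rhs => rw [← Multiset.filter_add_not (fun x => 0 < x) L]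
    rw [Multiset.sum_add, left_eq_add]
    exact Multiset.sum_eq_zero fun x hx => by simpa using (Multiset.mem_filter.mp hx).2
  rw [cCollapse, Multiset.sum_add, hfilter_pos, Multiset.sum_coe, starOp_sum, ← Multiset.sum_coe,
    coe_descSort, ← Multiset.sum_add]
  congr 1
  conv_rhs => rw [← Multiset.filter_add_not (fun x => x % 2 = 1) p]
  congr 1
  exact Multiset.filter_congr fun x _ => by omega

lemma pos_of_mem_cCollapse {p : Multiset ℕ} (hpos : ∀ x ∈ p, 0 < x) {x : ℕ}
    (hx : x ∈ cCollapse p) : 0 < x := by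
  rcases Multiset.mem_add.mp hx with h | h
  · exact (Multiset.mem_filter.mp h).2
  · exact hpos x (Multiset.mem_of_mem_filter h)

lemma even_count_cCollapse {p : Multiset ℕ} (hp : Even p.sum) {v : ℕ} (hv : Odd v) :
    Even ((cCollapse p).count v) := by
  set odds := p.filter (fun x => x % 2 = 1)
  have hv' := Nat.odd_iff.mp hv
  have hevens : (p.filter (fun x => x % 2 = 0)).count v = 0 := by
    rw [Multiset.count_eq_zero]
    intro h
    have := (Multiset.mem_filter.mp h).2
    omega
  have hodds : ∀ x ∈ descSort odds, Odd x := fun x hx => by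
    rw [← Multiset.mem_coe, coe_descSort] at hx
    exact Nat.odd_iff.mpr (Multiset.mem_filter.mp hx).2
  have hlen : Even (descSort odds).length := by
    rw [← Multiset.coe_card, coe_descSort]
    exact (Multiset.even_sum_iff_even_card_filter_odd p).mp hp
  rw [cCollapse, Multiset.count_add, hevens, add_zero, Multiset.count_filter_of_pos (by omega),
    Multiset.coe_count]
  exact even_count_starOp hodds (pairwise_descSort odds) hlen hv

/-- For a partition `𝔭` of an even number `N` (so that `𝔭` has an even number of odd parts),
the result of the `C`-collapse algorithm is a partition of `N` in which every odd part occurs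
with even multiplicity (i.e. it is the Jordan type of a nilpotent orbit of type `C`). -/
theorem stmt9 (N : ℕ) (hN : Even N) (p : Multiset ℕ)
    (hpos : ∀ x ∈ p, 0 < x) (hsum : p.sum = N) :
    (cCollapse p).sum = N ∧
    (∀ x ∈ cCollapse p, 0 < x) ∧
    (∀ x ∈ cCollapse p, Odd x → Even ((cCollapse p).count x)) := by
  subst hsum
  exact ⟨sum_cCollapse p, fun _ => pos_of_mem_cCollapse hpos,
    fun _ _ hx => even_count_cCollapse hN hx⟩
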